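/- A conjugate skew gain graph G^φ is balanced if and only if it is switching equivalent to G^{|φ|}, i.e., there exists ζ: V → 𝕋 such that |φ(uv)| = conj(ζ(u))·φ(uv)·ζ(v) for every oriented edge uv. -/

import Mathlib

open Complex SimpleGraph Finset

/-- The conjugate skew gain of a walk: the product of the skew gains of its
oriented edges in order. -/
def walkGain {V : Type*} (φ : V → V → ℂ) {G : SimpleGraph V} :
    {u v : V} → G.Walk u v → ℂ
  | _, _, .nil => 1
  | u, _, .cons (v := w) _ p => φ u w * walkGain φ p

/-- A shortest oriented path from `u` to `v`. -/
def IsShortest {V : Type*} (G : SimpleGraph V) {u v : V} (p : G.Walk u v) : Prop :=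
  p.IsPath ∧ p.length = G.dist u v

/-- A conjugate skew gain graph is balanced if the skew gain of every oriented
cycle `C` satisfies `φ(C) = |φ(C)|`. -/
def CSGBalanced {V : Type*} (G : SimpleGraph V) (φ : V → V → ℂ) : Prop :=
  ∀ (u : V) (c : G.Walk u u), c.IsCycle →
    walkGain φ c = (‖walkGain φ c‖ : ℂ)
/-- pairs -/
def DistCompatPair {V : Type*} (G : SimpleGraph V) (φ : V → V → ℂ) (u v : V) : Prop :=
  ∀ p q : G.Walk u v, IsShortest G p → IsShortest G q → walkGain φ p = walkGain φ q

def ModCompatPair {V : Type*} (G : SimpleGraph V) (φ : V → V → ℂ) (u v : V) : Prop :=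
  ∀ p q : G.Walk u v, IsShortest G p → IsShortest G q →
    ‖walkGain φ p‖ = ‖walkGain φ q‖

def ArgCompatPair {V : Type*} (G : SimpleGraph V) (φ : V → V → ℂ) (u v : V) : Prop :=
  ∀ p q : G.Walk u v, IsShortest G p → IsShortest G q →
    ∃ r : ℝ, 0 < r ∧ walkGain φ p / walkGain φ q = (r : ℂ)

noncomputable def Dmat {V : Type*} [Fintype V] [DecidableEq V] (G : SimpleGraph V)
    (g : V → V → ℂ) : Matrix V V ℂ :=
  fun u v => if u = v then 0 else (G.dist u v : ℂ) * g u v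

lemma walkGain_nil {V : Type*} (φ : V → V → ℂ) {G : SimpleGraph V} {u : V} :
    walkGain φ (SimpleGraph.Walk.nil : G.Walk u u) = 1 := rfl

lemma walkGain_cons {V : Type*} (φ : V → V → ℂ) {G : SimpleGraph V} {u w v : V}
    (h : G.Adj u w) (p : G.Walk w v) :
    walkGain φ (SimpleGraph.Walk.cons h p) = φ u w * walkGain φ p := rfl

lemma walkGain_append {V : Type*} (φ : V → V → ℂ) {G : SimpleGraph V} {u v w : V}
    (p : G.Walk u v) (q : G.Walk v w) :
    walkGain φ (p.append q) = walkGain φ p * walkGain φ q := by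
  induction p with
  | nil => simp [walkGain_nil, SimpleGraph.Walk.nil_append]
  | cons h p ih => simp [walkGain_cons, SimpleGraph.Walk.cons_append, ih, mul_assoc]

lemma walkGain_reverse {V : Type*} {G : SimpleGraph V} (φ : V → V → ℂ)
    (hsym : ∀ u v, G.Adj u v → φ v u = (starRingEnd ℂ) (φ u v))
    {u v : V} (p : G.Walk u v) :
    walkGain φ p.reverse = (starRingEnd ℂ) (walkGain φ p) := by
  induction p with
  | nil => simp [walkGain_nil]
  | cons h p ih =>
    rw [SimpleGraph.Walk.reverse_cons, walkGain_append, ih, walkGain_cons, walkGain_nil,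
      hsym _ _ h, walkGain_cons, map_mul]
    ring

lemma walkGain_ne_zero {V : Type*} {G : SimpleGraph V} {φ : V → V → ℂ}
    (hne : ∀ u v, G.Adj u v → φ u v ≠ 0) {u v : V} (p : G.Walk u v) :
    walkGain φ p ≠ 0 := by
  induction p with
  | nil => simp [walkGain_nil]
  | cons h p ih => exact mul_ne_zero (hne _ _ h) ih

lemma closedWalkGain_eq_abs {V : Type*} {G : SimpleGraph V} {φ : V → V → ℂ}
    (hsym : ∀ u v, G.Adj u v → φ v u = (starRingEnd ℂ) (φ u v))
    (hbal : CSGBalanced G φ) :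
    ∀ (n : ℕ) (u : V) (c : G.Walk u u), c.length = n →
      walkGain φ c = (‖walkGain φ c‖ : ℂ) := by
  intro n
  induction n using Nat.strong_induction_on with
  | _ n ih =>
    intro u c hlen
    classical
    cases c with
    | nil => simp [walkGain_nil]
    | cons h p =>
      rename_i w
      by_cases hnd : p.support.Nodup
      · have hp : p.IsPath := (SimpleGraph.Walk.isPath_def p).mpr hnd
        by_cases he : s(u, w) ∈ p.edges
        · cases p with
          | nil => exact absurd h (G.irrefl)
          | cons h2 p2 =>
            rename_i x
            rw [SimpleGraph.Walk.edges_cons, List.mem_cons] at he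
            rcases he with he | he
            · have hxu : x = u := by
                rw [Sym2.eq_iff] at he
                rcases he with ⟨h1, _⟩ | ⟨h1, _⟩
                · exact absurd h1 h.ne
                · exact h1.symm
              subst hxu
              rw [SimpleGraph.Walk.support_cons, List.nodup_cons] at hnd
              have hp2 : p2 = SimpleGraph.Walk.nil :=
                (SimpleGraph.Walk.isPath_iff_eq_nil (p := p2)).mp
                  ((SimpleGraph.Walk.isPath_def p2).mpr hnd.2)
              subst hp2
              rw [walkGain_cons, walkGain_cons, walkGain_nil, mul_one, hsym _ _ h,
                Complex.mul_conj, Complex.norm_real, Real.norm_eq_abs,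
                _root_.abs_of_nonneg (Complex.normSq_nonneg _)]
            · have hw : w ∈ p2.support :=
                SimpleGraph.Walk.snd_mem_support_of_mem_edges p2 he
              rw [SimpleGraph.Walk.support_cons, List.nodup_cons] at hnd
              exact absurd hw hnd.1
        · exact hbal u (SimpleGraph.Walk.cons h p)
            ((SimpleGraph.Walk.cons_isCycle_iff p h).mpr ⟨hp, he⟩)
      · obtain ⟨x, hx⟩ := List.exists_duplicate_iff_not_nodup.mpr hnd
        have hcount : 2 ≤ p.support.count x := List.duplicate_iff_two_le_count.mp hx
        set c : G.Walk u u := SimpleGraph.Walk.cons h p with hc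
        have hxsup : x ∈ c.support := by
          rw [hc, SimpleGraph.Walk.support_cons]
          exact List.mem_cons_of_mem _ hx.mem
        set c' := c.rotate x hxsup with hc'
        have hg : walkGain φ c' = walkGain φ c := by
          rw [hc', SimpleGraph.Walk.rotate, walkGain_append, mul_comm, ← walkGain_append,
            c.take_spec hxsup]
        have hlen' : c'.length = c.length := by
          rw [hc', SimpleGraph.Walk.rotate, SimpleGraph.Walk.length_append, add_comm,
            ← SimpleGraph.Walk.length_append, c.take_spec hxsup]
        have hcount' : 2 ≤ c'.support.tail.count x := by
          rw [(SimpleGraph.Walk.support_rotate c x hxsup).perm.count_eq]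
          rw [hc, SimpleGraph.Walk.support_cons, List.tail_cons]
          exact hcount
        clear_value c'
        clear hc'
        cases c' with
        | nil => simp at hcount'
        | cons h' p' =>
          rename_i w'
          rw [SimpleGraph.Walk.support_cons, List.tail_cons] at hcount'
          have hxp' : x ∈ p'.support := by
            rw [← List.count_pos_iff]
            omega
          have hspec := p'.take_spec hxp'
          have hone := p'.count_support_takeUntil_eq_one hxp'
          have hsupp : p'.support =
              (p'.takeUntil x hxp').support ++ (p'.dropUntil x hxp').support.tail := by
            conv_lhs => rw [← hspec]
            rw [SimpleGraph.Walk.support_append]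
          have h2pos : 0 < (p'.dropUntil x hxp').length := by
            have hmem : x ∈ (p'.dropUntil x hxp').support.tail := by
              rw [← List.count_pos_iff]
              have h3 := hcount'
              rw [hsupp, List.count_append, hone] at h3
              omega
            have hlp := List.length_pos_of_mem hmem
            have h4 : (p'.dropUntil x hxp').support.length = (p'.dropUntil x hxp').length + 1 :=
              SimpleGraph.Walk.length_support _
            rw [List.length_tail, h4] at hlp
            omega
          have hlsum : 1 + (p'.takeUntil x hxp').length + (p'.dropUntil x hxp').length = n := by
            have h5 := congrArg SimpleGraph.Walk.length hspec
            rw [SimpleGraph.Walk.length_append] at h5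
            have h6 : p'.length + 1 = n := by
              rw [← hlen, ← hlen', SimpleGraph.Walk.length_cons]
            omega
          have hgc : walkGain φ (SimpleGraph.Walk.cons h' (p'.takeUntil x hxp')) *
              walkGain φ (p'.dropUntil x hxp') = walkGain φ c := by
            rw [← hg, walkGain_cons, walkGain_cons]
            conv_rhs => rw [← hspec]
            rw [walkGain_append, mul_assoc]
          have hA := ih (1 + (p'.takeUntil x hxp').length) (by omega) x
            (SimpleGraph.Walk.cons h' (p'.takeUntil x hxp'))
            (by rw [SimpleGraph.Walk.length_cons]; omega)
          have hB := ih ((p'.dropUntil x hxp').length) (by omega) x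
            (p'.dropUntil x hxp') rfl
          rw [← hgc, hA, hB, ← Complex.ofReal_mul, Complex.norm_real, Real.norm_eq_abs,
            _root_.abs_of_nonneg (mul_nonneg (norm_nonneg _) (norm_nonneg _))]

lemma switch_walkGain {V : Type*} {G : SimpleGraph V} {φ : V → V → ℂ} {ζ : V → ℂ}
    (hζ1 : ∀ v, ζ v * (starRingEnd ℂ) (ζ v) = 1)
    (hφ : ∀ u v, G.Adj u v →
      (‖φ u v‖ : ℂ) = (starRingEnd ℂ) (ζ u) * φ u v * ζ v)
    {u v : V} (p : G.Walk u v) :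
    (‖walkGain φ p‖ : ℂ) = (starRingEnd ℂ) (ζ u) * walkGain φ p * ζ v := by
  induction p with
  | nil =>
    rename_i a
    simp only [walkGain_nil, norm_one, Complex.ofReal_one, mul_one]
    linear_combination (-1 : ℂ) * hζ1 a
  | cons h p ih =>
    rename_i a b cc
    rw [walkGain_cons, norm_mul, Complex.ofReal_mul, hφ _ _ h, ih]
    linear_combination ((starRingEnd ℂ) (ζ a) * φ a b * walkGain φ p * ζ cc) * hζ1 b

/-- A conjugate skew gain graph is balanced if and only if it is switching
equivalent to `G^{|φ|}`. -/
theorem balanced_iff_switching_equivalent_abs {V : Type*}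
    (G : SimpleGraph V) (φ : V → V → ℂ) (hconn : G.Connected)
    (hne : ∀ u v, G.Adj u v → φ u v ≠ 0)
    (hsym : ∀ u v, G.Adj u v → φ v u = (starRingEnd ℂ) (φ u v)) :
    CSGBalanced G φ ↔
      ∃ ζ : V → ℂ, (∀ v, ‖ζ v‖ = 1) ∧
        ∀ u v : V, G.Adj u v →
          (‖φ u v‖ : ℂ) = (starRingEnd ℂ) (ζ u) * φ u v * ζ v := by
  classical
  constructor
  · intro hbal
    obtain ⟨r⟩ := hconn.nonempty
    have P : ∀ v, G.Walk r v := fun v => Classical.choice (hconn.preconnected r v)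
    have hg0 : ∀ v, walkGain φ (P v) ≠ 0 := fun v => walkGain_ne_zero hne _
    have hga : ∀ v, ‖walkGain φ (P v)‖ ≠ 0 :=
      fun v => by simpa using hg0 v
    refine ⟨fun v => (starRingEnd ℂ) (walkGain φ (P v)) /
      ((‖walkGain φ (P v)‖ : ℝ) : ℂ), ?_, ?_⟩
    · intro v
      rw [norm_div, Complex.norm_conj, Complex.norm_real, Real.norm_eq_abs,
        _root_.abs_of_nonneg (norm_nonneg _), div_self (hga v)]
    · intro a b hab
      have key := closedWalkGain_eq_abs hsym hbal _ r
        ((P a).append (SimpleGraph.Walk.cons hab (P b).reverse)) rfl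
      rw [walkGain_append, walkGain_cons, walkGain_reverse φ hsym] at key
      rw [norm_mul, norm_mul, Complex.norm_conj] at key
      push_cast at key
      -- key : g a * (φ a b * conj (g b)) = ↑|g a| * (↑|φ a b| * ↑|g b|)
      simp only [map_div₀, Complex.conj_conj, Complex.conj_ofReal]
      have hca : ((‖walkGain φ (P a)‖ : ℝ) : ℂ) ≠ 0 := by
        simpa using hga a
      have hcb : ((‖walkGain φ (P b)‖ : ℝ) : ℂ) ≠ 0 := by
        simpa using hga b
      field_simp
      linear_combination (-1 : ℂ) * key
  · intro ⟨ζ, hζ, hφ⟩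
    have hζ1 : ∀ v, ζ v * (starRingEnd ℂ) (ζ v) = 1 := by
      intro v
      rw [Complex.mul_conj, ← Complex.sq_norm, hζ v]
      norm_num
    intro u c _
    have h1 := switch_walkGain hζ1 hφ c
    linear_combination (-(walkGain φ c)) * hζ1 u - h1
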